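/- Let V be a finite set, f : Finset V → ℝ a submodular function with f(∅) = 0, M a matroid on V of rank k ≥ 1, and let P_1, …, P_k be a greedy splitting sequence for (f, M). Then for every 1 ≤ i ≤ k, every partition {V_1, …, V_i} of V into i nonempty parts admitting an independent transversal, and every choice of one distinguished index ℓ ∈ [i], we have Σ_{X ∈ P_i} f(X) ≤ Σ_{j ∈ [i], j ≠ ℓ} ( f(V_j) + f(V \ V_j) ) − (i − 2) · f(V). -/

import Mathlib

open Finset

variable {V : Type*} [Fintype V] [DecidableEq V]

/-- `P` admits an independent transversal: there is an independent set containing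
exactly one element of each class of `P`. -/
def AdmitsTransversal (Indep : Finset V → Prop) (P : Finset (Finset V)) : Prop :=
  ∃ I : Finset V, Indep I ∧ ∀ X ∈ P, (I ∩ X).card = 1

/-- `P 1, …, P k` is a greedy splitting sequence for `(f, M)`: it starts with the trivial
partition `{V}` and, at each step, one class `W` is split into nonempty parts `X, W \ X`
such that the new partition admits an independent transversal and the split minimizes
`f(X') + f(W' \ X') - f(W')` over all such admissible splits. -/
def GreedySplitSeq (f : Finset V → ℝ) (Indep : Finset V → Prop) (k : ℕ)
    (P : ℕ → Finset (Finset V)) : Prop :=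
  P 1 = {Finset.univ} ∧
  ∀ i : ℕ, 1 ≤ i → i + 1 ≤ k →
    ∃ W ∈ P i, ∃ X : Finset V, X.Nonempty ∧ X ⊂ W ∧
      P (i + 1) = insert X (insert (W \ X) ((P i).erase W)) ∧
      AdmitsTransversal Indep (P (i + 1)) ∧
      ∀ W' ∈ P i, ∀ X' : Finset V, X'.Nonempty → X' ⊂ W' →
        AdmitsTransversal Indep (insert X' (insert (W' \ X') ((P i).erase W'))) →
        f X + f (W \ X) - f W ≤ f X' + f (W' \ X') - f W'

/-!
Induction on `i`. Given a partition `R` into `i + 1` parts with an independent transversal, the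
greedy partition `P i` has fewer classes, so matroid augmentation applied to a transversal of
`P i` that meets a fixed transversal of `R` maximally yields an independent set meeting one
class `W` of `P i` in two points that lie in different parts of `R`. Hence for some part
`Y ≠ ℓ` of `R`, splitting `W` along `Y` is admissible; by greedy minimality and submodularity
the `(i + 1)`-st greedy step costs at most `f Y + f (V \ Y) - f V`. Merging `Y` into `ℓ` gives a
partition into `i` parts with an independent transversal, to which the induction hypothesis
applies.
-/

section Partition

variable {α : Type*}

def IsPartition (Q : Finset (Finset α)) : Prop :=
  (∀ C ∈ Q, C.Nonempty) ∧ (Q : Set (Finset α)).PairwiseDisjoint id ∧ ∀ v : α, ∃ C ∈ Q, v ∈ C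

namespace IsPartition

variable {Q : Finset (Finset α)} {C D W X : Finset α}

lemma disjoint (hQ : IsPartition Q) (hC : C ∈ Q) (hD : D ∈ Q) (hCD : C ≠ D) : Disjoint C D :=
  hQ.2.1 hC hD hCD

lemma notMem_of_mem_of_ne (hQ : IsPartition Q) (hC : C ∈ Q) (hD : D ∈ Q) (hCD : C ≠ D)
    {v : α} (hvC : v ∈ C) : v ∉ D :=
  disjoint_left.1 (hQ.disjoint hC hD hCD) hvC

lemma eq_of_subset (hQ : IsPartition Q) (hC : C ∈ Q) (hD : D ∈ Q) (hCD : C ⊆ D) : C = D := by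
  by_contra hne
  obtain ⟨v, hv⟩ := hQ.1 C hC
  exact hQ.notMem_of_mem_of_ne hC hD hne hv (hCD hv)

end IsPartition

variable [DecidableEq α]

def IsTransversal (Q : Finset (Finset α)) (I : Finset α) : Prop :=
  ∀ C ∈ Q, (I ∩ C).card = 1

def splitClass (Q : Finset (Finset α)) (W X : Finset α) : Finset (Finset α) :=
  insert X (insert (W \ X) (Q.erase W))

def mergeClasses (Q : Finset (Finset α)) (C D : Finset α) : Finset (Finset α) :=
  insert (C ∪ D) ((Q.erase C).erase D)

namespace IsPartition

variable {Q : Finset (Finset α)} {C D W X : Finset α}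

lemma notMem_splitClass (hQ : IsPartition Q) (hW : W ∈ Q) (hX : X.Nonempty) (hXW : X ⊂ W) :
    X ∉ insert (W \ X) (Q.erase W) ∧ W \ X ∉ Q.erase W := by
  refine ⟨fun h => ?_, fun h => ?_⟩
  · rcases mem_insert.1 h with h | h
    · obtain ⟨v, hv⟩ := hX
      exact (mem_sdiff.1 (h ▸ hv)).2 hv
    · exact hXW.ne (hQ.eq_of_subset (mem_of_mem_erase h) hW hXW.subset)
  · exact ne_of_mem_erase h (hQ.eq_of_subset (mem_of_mem_erase h) hW sdiff_subset)

lemma split (hQ : IsPartition Q) (hW : W ∈ Q) (hX : X.Nonempty) (hXW : X ⊂ W) :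
    IsPartition (splitClass Q W X) := by
  obtain ⟨v, hvW, hvX⟩ := exists_of_ssubset hXW
  have hrest : ∀ Y ∈ Q.erase W, Disjoint W Y := fun Y hY =>
    hQ.disjoint hW (mem_of_mem_erase hY) (ne_of_mem_erase hY).symm
  refine ⟨?_, ?_, fun u => ?_⟩
  · simp only [splitClass, mem_insert]
    rintro Y (rfl | rfl | hY)
    exacts [hX, ⟨v, mem_sdiff.2 ⟨hvW, hvX⟩⟩, hQ.1 Y (mem_of_mem_erase hY)]
  · simp only [splitClass, coe_insert]
    refine ((hQ.2.1.subset (coe_subset.2 (erase_subset W Q))).insert fun Y hY _ => ?_).insert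
      fun Y hY _ => ?_
    · exact (hrest Y hY).mono_left sdiff_subset
    · rcases hY with rfl | hY
      · exact disjoint_sdiff
      · exact (hrest Y hY).mono_left hXW.subset
  · obtain ⟨Y, hY, huY⟩ := hQ.2.2 u
    simp only [splitClass, mem_insert, mem_erase, exists_eq_or_imp]
    by_cases hYW : Y = W
    · subst hYW
      by_cases huX : u ∈ X
      exacts [Or.inl huX, Or.inr (Or.inl (mem_sdiff.2 ⟨huY, huX⟩))]
    · exact Or.inr (Or.inr ⟨Y, ⟨hYW, hY⟩, huY⟩)

lemma card_splitClass (hQ : IsPartition Q) (hW : W ∈ Q) (hX : X.Nonempty) (hXW : X ⊂ W) :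
    (splitClass Q W X).card = Q.card + 1 := by
  obtain ⟨h₁, h₂⟩ := hQ.notMem_splitClass hW hX hXW
  rw [splitClass, card_insert_of_notMem h₁, card_insert_of_notMem h₂,
    card_erase_add_one hW]

lemma sum_splitClass {β : Type*} [AddCommGroup β] (f : Finset α → β) (hQ : IsPartition Q)
    (hW : W ∈ Q) (hX : X.Nonempty) (hXW : X ⊂ W) :
    ∑ Y ∈ splitClass Q W X, f Y = ∑ Y ∈ Q, f Y + (f X + f (W \ X) - f W) := by
  obtain ⟨h₁, h₂⟩ := hQ.notMem_splitClass hW hX hXW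
  rw [splitClass, sum_insert h₁, sum_insert h₂, sum_erase_eq_sub hW]
  abel

lemma union_notMem_erase (hQ : IsPartition Q) (hC : C ∈ Q) :
    C ∪ D ∉ (Q.erase C).erase D := fun h =>
  ne_of_mem_erase (mem_of_mem_erase h)
    (hQ.eq_of_subset hC (mem_of_mem_erase (mem_of_mem_erase h)) subset_union_left).symm

lemma merge (hQ : IsPartition Q) (hC : C ∈ Q) (hD : D ∈ Q) :
    IsPartition (mergeClasses Q C D) := by
  have hrest : ∀ Y ∈ (Q.erase C).erase D, Disjoint (C ∪ D) Y := fun Y hY => by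
    obtain ⟨hYD, hYC, hY⟩ : Y ≠ D ∧ Y ≠ C ∧ Y ∈ Q := by simpa using hY
    exact disjoint_union_left.2 ⟨hQ.disjoint hC hY hYC.symm, hQ.disjoint hD hY hYD.symm⟩
  refine ⟨?_, ?_, fun u => ?_⟩
  · simp only [mergeClasses, mem_insert]
    rintro Y (rfl | hY)
    exacts [(hQ.1 C hC).mono subset_union_left,
      hQ.1 Y (mem_of_mem_erase (mem_of_mem_erase hY))]
  · simp only [mergeClasses, coe_insert]
    exact (hQ.2.1.subset (coe_subset.2 ((erase_subset D _).trans (erase_subset C Q)))).insert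
      fun Y hY _ => hrest Y hY
  · obtain ⟨Y, hY, huY⟩ := hQ.2.2 u
    simp only [mergeClasses, mem_insert, mem_erase, exists_eq_or_imp]
    by_cases hYC : Y = C
    · exact Or.inl (mem_union_left _ (hYC ▸ huY))
    by_cases hYD : Y = D
    · exact Or.inl (mem_union_right _ (hYD ▸ huY))
    exact Or.inr ⟨Y, ⟨hYD, hYC, hY⟩, huY⟩

lemma card_mergeClasses_add_one (hQ : IsPartition Q) (hC : C ∈ Q) (hD : D ∈ Q) (hCD : C ≠ D) :
    (mergeClasses Q C D).card + 1 = Q.card := by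
  rw [mergeClasses, card_insert_of_notMem (hQ.union_notMem_erase hC),
    card_erase_add_one (mem_erase.2 ⟨hCD.symm, hD⟩), card_erase_add_one hC]

lemma erase_mergeClasses (hQ : IsPartition Q) (hC : C ∈ Q) :
    (mergeClasses Q C D).erase (C ∪ D) = (Q.erase C).erase D :=
  erase_insert (hQ.union_notMem_erase hC)

lemma card_eq_of_isTransversal (hQ : IsPartition Q) {I : Finset α} (hI : IsTransversal Q I) :
    I.card = Q.card := by
  have hI_eq : I = Q.biUnion (I ∩ ·) := by
    ext v
    simp only [mem_biUnion, mem_inter]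
    exact ⟨fun hv => (hQ.2.2 v).imp fun C hC => ⟨hC.1, hv, hC.2⟩, fun ⟨_, _, hv, _⟩ => hv⟩
  rw [hI_eq, card_biUnion fun C hC D hD hCD =>
    (hQ.disjoint hC hD hCD).mono inter_subset_right inter_subset_right]
  simp [sum_congr rfl hI]

lemma isTransversal_mergeClasses (hQ : IsPartition Q) (hC : C ∈ Q) (hD : D ∈ Q) (hCD : C ≠ D)
    {I : Finset α} (hI : IsTransversal Q I) {x : α} (hx : x ∈ I ∩ D) :
    IsTransversal (mergeClasses Q C D) (I.erase x) := by
  simp only [IsTransversal, mergeClasses, mem_insert, forall_eq_or_imp, erase_inter]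
  refine ⟨?_, fun Y hY => ?_⟩
  · rw [inter_union_distrib_left, card_erase_of_mem (mem_union_right _ hx),
      card_union_of_disjoint ((hQ.disjoint hC hD hCD).mono inter_subset_right inter_subset_right),
      hI C hC, hI D hD]
  · obtain ⟨hYD, -, hY⟩ : Y ≠ D ∧ Y ≠ C ∧ Y ∈ Q := by simpa using hY
    rw [erase_eq_of_notMem fun h => hQ.notMem_of_mem_of_ne hD hY hYD.symm (mem_inter.1 hx).2
      (mem_inter.1 h).2, hI Y hY]

lemma isTransversal_insert (hQ : IsPartition Q) (hW : W ∈ Q) {J : Finset α}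
    (hJ : IsTransversal Q J) {e : α} (he : e ∈ W) : IsTransversal (Q.erase W) (insert e J) :=
  fun Y hY => by
    rw [insert_inter_of_notMem (hQ.notMem_of_mem_of_ne hW (mem_of_mem_erase hY)
      (ne_of_mem_erase hY).symm he)]
    exact hJ Y (mem_of_mem_erase hY)

lemma isTransversal_erase (hQ : IsPartition Q) (hW : W ∈ Q) {T : Finset α}
    (hT : IsTransversal (Q.erase W) T) {e w : α} (hTW : T ∩ W = {e, w}) (hew : e ≠ w) :
    IsTransversal Q (T.erase w) := by
  intro Y hY
  rw [erase_inter]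
  by_cases hYW : Y = W
  · subst hYW
    simp [hTW, erase_insert_of_ne hew]
  · have hwW : w ∈ W := (mem_inter.1 (hTW ▸ mem_insert_of_mem (mem_singleton_self w))).2
    rw [erase_eq_of_notMem fun h => hQ.notMem_of_mem_of_ne hW hY (Ne.symm hYW) hwW
      (mem_inter.1 h).2]
    exact hT Y (mem_erase.2 ⟨hYW, hY⟩)

end IsPartition

lemma isTransversal_splitClass_inter {Q : Finset (Finset α)} {W Y T : Finset α}
    (hT : IsTransversal (Q.erase W) T) {u v : α} (hTW : T ∩ W = {u, v}) (hu : u ∈ Y)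
    (hv : v ∉ Y) : IsTransversal (splitClass Q W (W ∩ Y)) T := by
  simp only [IsTransversal, splitClass, mem_insert, forall_eq_or_imp, sdiff_inter_self_left]
  refine ⟨?_, ?_, hT⟩
  · rw [← inter_assoc, hTW]
    simp [hu, hv]
  · rw [← inter_sdiff_assoc, hTW, insert_sdiff_of_mem _ hu,
      sdiff_eq_self_of_disjoint (disjoint_singleton_left.2 hv), card_singleton]

end Partition

section IndexedPartition

variable {α ι : Type*} {Vp : ι → Finset α}

lemma injective_of_pairwise_disjoint (h_ne : ∀ j, (Vp j).Nonempty)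
    (h_disj : ∀ j j', j ≠ j' → Disjoint (Vp j) (Vp j')) : Function.Injective Vp := by
  intro j j' hjj'
  by_contra hne
  obtain ⟨v, hv⟩ := h_ne j
  exact disjoint_left.1 (h_disj j j' hne) hv (hjj' ▸ hv)

variable [DecidableEq α] [Fintype ι]

lemma isPartition_image (h_ne : ∀ j, (Vp j).Nonempty)
    (h_disj : ∀ j j', j ≠ j' → Disjoint (Vp j) (Vp j')) (h_cover : ∀ v : α, ∃ j, v ∈ Vp j) :
    IsPartition (univ.image Vp) := by
  refine ⟨?_, ?_, fun v => ?_⟩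
  · simp only [mem_image, mem_univ, true_and, forall_exists_index, forall_apply_eq_imp_iff]
    exact h_ne
  · simp only [coe_image, coe_univ, Set.image_univ]
    rintro _ ⟨j, rfl⟩ _ ⟨j', rfl⟩ hne
    exact h_disj j j' fun h => hne (h ▸ rfl)
  · obtain ⟨j, hj⟩ := h_cover v
    exact ⟨Vp j, mem_image_of_mem Vp (mem_univ j), hj⟩

lemma isTransversal_image {I : Finset α} (hI : ∀ j, (I ∩ Vp j).card = 1) :
    IsTransversal (univ.image Vp) I := by
  simpa [IsTransversal] using hI

end IndexedPartition

lemma split_cost_le_of_submodular {β : Type*} [BooleanAlgebra β] {f : β → ℝ}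
    (h_submod : ∀ a b, f (a ⊔ b) + f (a ⊓ b) ≤ f a + f b) (w a : β) :
    f (w ⊓ a) + f (w \ a) - f w ≤ f a + f aᶜ - f ⊤ := by
  have h₁ := h_submod a w
  have h₂ := h_submod aᶜ w
  have h₃ := h_submod (a ⊔ w) (aᶜ ⊔ w)
  rw [inf_comm] at h₁
  rw [inf_comm, ← sdiff_eq] at h₂
  rw [sup_sup_sup_comm, sup_compl_eq_top, top_sup_eq, ← sup_inf_right, inf_compl_self,
    bot_sup_eq] at h₃
  linarith

section Exchange

variable {Indep : Finset V → Prop}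

lemma exists_indep_pair_in_class
    (h_subset : ∀ ⦃I J : Finset V⦄, Indep J → I ⊆ J → Indep I)
    (h_exchange : ∀ ⦃I J : Finset V⦄, Indep I → Indep J → I.card < J.card →
      ∃ e ∈ J \ I, Indep (insert e I))
    {Q R : Finset (Finset V)} (hQ : IsPartition Q) (hQtr : AdmitsTransversal Indep Q)
    (hR : IsPartition R) (hRtr : AdmitsTransversal Indep R) (hQR : Q.card < R.card) :
    ∃ T, Indep T ∧ ∃ W ∈ Q, ∃ e w, IsTransversal (Q.erase W) T ∧ T ∩ W = {e, w} ∧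
      ∀ Y ∈ R, e ∈ Y → w ∉ Y := by
  classical
  obtain ⟨I', hI', hI'R⟩ := hRtr
  obtain ⟨J, hJmem, hJmax⟩ :=
    exists_max_image ({J | Indep J ∧ IsTransversal Q J} : Finset (Finset V))
      (fun J => (J ∩ I').card)
      (by obtain ⟨J₀, hJ₀⟩ := hQtr; exact ⟨J₀, mem_filter.2 ⟨mem_univ _, hJ₀⟩⟩)
  obtain ⟨hJ, hJQ⟩ : Indep J ∧ IsTransversal Q J := by simpa using hJmem
  obtain ⟨e, he, heJ⟩ := h_exchange hJ hI' (by
    rwa [hQ.card_eq_of_isTransversal hJQ, hR.card_eq_of_isTransversal hI'R])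
  obtain ⟨heI', he_notMem⟩ := mem_sdiff.1 he
  obtain ⟨W, hW, heW⟩ := hQ.2.2 e
  obtain ⟨w, hw⟩ := card_eq_one.1 (hJQ W hW)
  have hwJ : w ∈ J := (mem_inter.1 (hw ▸ mem_singleton_self w)).1
  have hew : e ≠ w := fun h => he_notMem (h ▸ hwJ)
  have hTW : insert e J ∩ W = {e, w} := by rw [insert_inter_of_mem heW, hw]
  have hT := hQ.isTransversal_insert hW hJQ heW
  refine ⟨insert e J, heJ, W, hW, e, w, hT, hTW, fun Y hY heY hwY => ?_⟩
  -- otherwise swapping `w` for `e` would give a transversal of `Q` meeting `I'` in more points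
  have hwI' : w ∉ I' := fun hwI' => hew <|
    card_le_one.1 (hI'R Y hY).le e (mem_inter.2 ⟨heI', heY⟩) w (mem_inter.2 ⟨hwI', hwY⟩)
  have hswap : (insert e J).erase w ∩ I' = insert e (J ∩ I') := by
    rw [erase_inter, insert_inter_of_mem heI', erase_insert_of_ne hew,
      erase_eq_of_notMem fun h => hwI' (mem_inter.1 h).2]
  have hmax := hJmax ((insert e J).erase w) (by
    simpa using ⟨h_subset heJ (erase_subset _ _), hQ.isTransversal_erase hW hT hTW hew⟩)
  rw [hswap, card_insert_of_notMem fun h => he_notMem (mem_inter.1 h).1] at hmax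
  omega

lemma exists_admissible_split
    (h_subset : ∀ ⦃I J : Finset V⦄, Indep J → I ⊆ J → Indep I)
    (h_exchange : ∀ ⦃I J : Finset V⦄, Indep I → Indep J → I.card < J.card →
      ∃ e ∈ J \ I, Indep (insert e I))
    {Q R : Finset (Finset V)} (hQ : IsPartition Q) (hQtr : AdmitsTransversal Indep Q)
    (hR : IsPartition R) (hRtr : AdmitsTransversal Indep R) (hQR : Q.card < R.card)
    (L : Finset V) :
    ∃ W ∈ Q, ∃ Y ∈ R, Y ≠ L ∧ (W ∩ Y).Nonempty ∧ W ∩ Y ⊂ W ∧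
      AdmitsTransversal Indep (splitClass Q W (W ∩ Y)) := by
  obtain ⟨T, hT, W, hW, e, w, hTQ, hTW, hsep⟩ :=
    exists_indep_pair_in_class h_subset h_exchange hQ hQtr hR hRtr hQR
  obtain ⟨Y, hY, hYL, u, v, huv, hu, hv⟩ :
      ∃ Y ∈ R, Y ≠ L ∧ ∃ u v, T ∩ W = {u, v} ∧ u ∈ Y ∧ v ∉ Y := by
    obtain ⟨C, hC, heC⟩ := hR.2.2 e
    obtain ⟨D, hD, hwD⟩ := hR.2.2 w
    by_cases hCL : C = L
    · exact ⟨D, hD, fun h => hsep C hC heC (hCL ▸ h ▸ hwD), w, e, by rw [hTW, pair_comm], hwD,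
        fun heD => hsep D hD heD hwD⟩
    · exact ⟨C, hC, hCL, e, w, hTW, heC, hsep C hC heC⟩
  have huW : u ∈ W := (mem_inter.1 (huv ▸ mem_insert_self u {v})).2
  have hvW : v ∈ W := (mem_inter.1 (huv ▸ mem_insert_of_mem (mem_singleton_self v))).2
  exact ⟨W, hW, Y, hY, hYL, ⟨u, mem_inter.2 ⟨huW, hu⟩⟩,
    ⟨inter_subset_left, fun h => hv (mem_inter.1 (h hvW)).2⟩,
    T, hT, isTransversal_splitClass_inter hTQ huv hu hv⟩

end Exchange

namespace GreedySplitSeq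

variable {f : Finset V → ℝ} {Indep : Finset V → Prop} {k : ℕ} {P : ℕ → Finset (Finset V)}

lemma isPartition_card_admitsTransversal (hP : GreedySplitSeq f Indep k P) {v : V}
    (hv : Indep {v}) {n : ℕ} (hn : 1 ≤ n) (hnk : n ≤ k) :
    IsPartition (P n) ∧ (P n).card = n ∧ AdmitsTransversal Indep (P n) := by
  induction n, hn using Nat.le_induction with
  | base =>
    rw [hP.1]
    refine ⟨⟨?_, by simp, fun u => ⟨univ, mem_singleton_self _, mem_univ u⟩⟩, card_singleton _,
      {v}, hv, ?_⟩
    · simpa using ⟨v, mem_univ v⟩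
    · simp
  | succ n hn ih =>
    obtain ⟨hQ, hQn, -⟩ := ih (by omega)
    obtain ⟨W, hW, X, hX, hXW, hPn, hadm, -⟩ := hP.2 n hn hnk
    rw [hPn] at hadm ⊢
    exact ⟨hQ.split hW hX hXW, (hQ.card_splitClass hW hX hXW).trans (by rw [hQn]), hadm⟩

lemma sum_succ_le (hP : GreedySplitSeq f Indep k P) {n : ℕ} (hn : 1 ≤ n) (hnk : n + 1 ≤ k)
    (hQ : IsPartition (P n)) {W X : Finset V} (hW : W ∈ P n) (hX : X.Nonempty) (hXW : X ⊂ W)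
    (hadm : AdmitsTransversal Indep (splitClass (P n) W X)) :
    ∑ Y ∈ P (n + 1), f Y ≤ ∑ Y ∈ P n, f Y + (f X + f (W \ X) - f W) := by
  obtain ⟨W₀, hW₀, X₀, hX₀, hX₀W₀, hPn, -, hmin⟩ := hP.2 n hn hnk
  rw [hPn]
  exact (hQ.sum_splitClass f hW₀ hX₀ hX₀W₀).trans_le (by linarith [hmin W hW X hX hXW hadm])

theorem sum_le_of_isPartition (hP : GreedySplitSeq f Indep k P)
    (h_submod : ∀ A B : Finset V, f (A ∪ B) + f (A ∩ B) ≤ f A + f B)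
    (h_subset : ∀ ⦃I J : Finset V⦄, Indep J → I ⊆ J → Indep I)
    (h_exchange : ∀ ⦃I J : Finset V⦄, Indep I → Indep J → I.card < J.card →
      ∃ e ∈ J \ I, Indep (insert e I))
    {v : V} (hv : Indep {v}) {n : ℕ} (hn : 1 ≤ n) (hnk : n ≤ k) {R : Finset (Finset V)}
    (hR : IsPartition R) (hRn : R.card = n) (hRtr : AdmitsTransversal Indep R)
    {L : Finset V} (hL : L ∈ R) :
    ∑ X ∈ P n, f X ≤ ∑ C ∈ R.erase L, (f C + f (univ \ C)) - ((n : ℝ) - 2) * f univ := by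
  induction n, hn using Nat.le_induction generalizing R L with
  | base =>
    have hRL : R.erase L = ∅ := card_eq_zero.1 (by rw [card_erase_of_mem hL, hRn])
    rw [hP.1, sum_singleton, hRL, sum_empty]
    norm_num
  | succ n hn ih =>
    obtain ⟨hQ, hQn, hQtr⟩ := hP.isPartition_card_admitsTransversal hv hn (by omega)
    obtain ⟨W, hW, Y, hY, hYL, hX, hXW, hadm⟩ :=
      exists_admissible_split h_subset h_exchange hQ hQtr hR hRtr (by omega) L
    have h_step := hP.sum_succ_le hn hnk hQ hW hX hXW hadm
    have h_cost := split_cost_le_of_submodular h_submod W Y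
    simp only [inf_eq_inter, compl_eq_univ_sdiff, top_eq_univ] at h_cost
    obtain ⟨I, hI, hIR⟩ := hRtr
    obtain ⟨x, hx⟩ := card_eq_one.1 (hIR Y hY)
    have h_merge := ih (by omega) (hR.merge hL hY)
      (by have := hR.card_mergeClasses_add_one hL hY (Ne.symm hYL); omega)
      ⟨I.erase x, h_subset hI (erase_subset x I),
        hR.isTransversal_mergeClasses hL hY (Ne.symm hYL) hIR (hx ▸ mem_singleton_self x)⟩
      (mem_insert_self _ _)
    rw [hR.erase_mergeClasses hL] at h_merge
    rw [sdiff_inter_self_left] at h_step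
    rw [← add_sum_erase _ _ (mem_erase.2 ⟨hYL, hY⟩)]
    push_cast
    linarith

end GreedySplitSeq

theorem greedy_splitting_main_lemma_general
    (f : Finset V → ℝ)
    (h_submod : ∀ A B : Finset V, f (A ∪ B) + f (A ∩ B) ≤ f A + f B)
    (Indep : Finset V → Prop)
    (h_subset : ∀ ⦃I J : Finset V⦄, Indep J → I ⊆ J → Indep I)
    (h_exchange : ∀ ⦃I J : Finset V⦄, Indep I → Indep J → I.card < J.card →
      ∃ e ∈ J \ I, Indep (insert e I))
    (k : ℕ)
    (P : ℕ → Finset (Finset V)) (hP : GreedySplitSeq f Indep k P)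
    (i : ℕ) (hi1 : 1 ≤ i) (hik : i ≤ k)
    (Vp : Fin i → Finset V)
    (h_ne : ∀ j, (Vp j).Nonempty)
    (h_disj : ∀ j j', j ≠ j' → Disjoint (Vp j) (Vp j'))
    (h_cover : ∀ v : V, ∃ j, v ∈ Vp j)
    (h_tr : ∃ I : Finset V, Indep I ∧ ∀ j, (I ∩ Vp j).card = 1)
    (l : Fin i) :
    ∑ X ∈ P i, f X ≤
      (∑ j ∈ Finset.univ.erase l, (f (Vp j) + f (Finset.univ \ Vp j))) -
        ((i : ℝ) - 2) * f Finset.univ := by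
  obtain ⟨I, hI, hIVp⟩ := h_tr
  obtain ⟨x, hx⟩ := card_eq_one.1 (hIVp l)
  have hinj := injective_of_pairwise_disjoint h_ne h_disj
  have h_bound := hP.sum_le_of_isPartition h_submod h_subset h_exchange
    (h_subset hI (hx ▸ inter_subset_left)) hi1 hik (isPartition_image h_ne h_disj h_cover)
    (by rw [card_image_of_injective _ hinj, card_univ, Fintype.card_fin])
    ⟨I, hI, isTransversal_image hIVp⟩ (mem_image_of_mem Vp (mem_univ l))
  rwa [← image_erase hinj, sum_image hinj.injOn] at h_bound

/-- the main lemma for greedy splitting with a matroid constraint. -/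
theorem greedy_splitting_main_lemma
    (f : Finset V → ℝ)
    (h_submod : ∀ A B : Finset V, f (A ∪ B) + f (A ∩ B) ≤ f A + f B)
    (h_empty_f : f ∅ = 0)
    (Indep : Finset V → Prop)
    (h_empty : Indep ∅)
    (h_subset : ∀ ⦃I J : Finset V⦄, Indep J → I ⊆ J → Indep I)
    (h_exchange : ∀ ⦃I J : Finset V⦄, Indep I → Indep J → I.card < J.card →
      ∃ e ∈ J \ I, Indep (insert e I))
    (k : ℕ) (hk : 1 ≤ k)
    (h_rank_le : ∀ I : Finset V, Indep I → I.card ≤ k)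
    (h_rank_eq : ∃ B : Finset V, Indep B ∧ B.card = k)
    (P : ℕ → Finset (Finset V)) (hP : GreedySplitSeq f Indep k P)
    (i : ℕ) (hi1 : 1 ≤ i) (hik : i ≤ k)
    (Vp : Fin i → Finset V)
    (h_ne : ∀ j, (Vp j).Nonempty)
    (h_disj : ∀ j j', j ≠ j' → Disjoint (Vp j) (Vp j'))
    (h_cover : ∀ v : V, ∃ j, v ∈ Vp j)
    (h_tr : ∃ I : Finset V, Indep I ∧ ∀ j, (I ∩ Vp j).card = 1)
    (l : Fin i) :
    ∑ X ∈ P i, f X ≤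
      (∑ j ∈ Finset.univ.erase l, (f (Vp j) + f (Finset.univ \ Vp j))) -
        ((i : ℝ) - 2) * f Finset.univ :=
  greedy_splitting_main_lemma_general f h_submod Indep h_subset h_exchange k P hP i hi1 hik Vp h_ne
    h_disj h_cover h_tr l
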